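/- arXiv:2512.07243 — 2 statements merged into one kernel-verified Lean document; each statement's English description precedes it below -/
import Mathlib

section
/- Let x, y be binary words of the same length n. Then d_ID(x, y) ≥ |r(x) − r(y)|. Moreover, if |r(x) − r(y)| is odd, then d_ID(x, y) ≥ |r(x) − r(y)| + 1. -/
/-- Length of a longest common subsequence of two binary words. -/
noncomputable def lcsLen (x y : List Bool) : ℕ :=
  sSup {n | ∃ z : List Bool, z.length = n ∧ z.Sublist x ∧ z.Sublist y}

/-- The insdel distance `d_ID(x,y) = |x| + |y| - 2·LCS(x,y)`. -/
noncomputable def dID (x y : List Bool) : ℕ :=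
  x.length + y.length - 2 * lcsLen x y

/-- Number of runs (maximal blocks of consecutive equal symbols) of a binary word. -/
def runs (x : List Bool) : ℕ := (x.destutter (· ≠ ·)).length

/-- Maximum run length of a binary word: the largest `n` such that some constant
word of length `n` occurs as a block of consecutive symbols of `x`. -/
noncomputable def maxRun (x : List Bool) : ℕ :=
  sSup {n | ∃ b : Bool, (List.replicate n b).IsInfix x}

/-- `D_t(x)`: the words of length `|x| - t` that are subsequences of `x`. -/
def Dset (t : ℕ) (x : List Bool) : Set (List Bool) :=
  {z | z.length = x.length - t ∧ z.Sublist x}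

/-- `I_t(x)`: the words of length `|x| + t` that are supersequences of `x`. -/
def Iset (t : ℕ) (x : List Bool) : Set (List Bool) :=
  {z | z.length = x.length + t ∧ x.Sublist z}

/-- A systematic encoding `x ↦ (x, p(x))` with redundancy words `p x` of length `r`
is a function-correcting insdel code for `f` correcting `t` insdel errors. -/
noncomputable def IsFCIDC {k : ℕ} {S : Type*} (f : (Fin k → Bool) → S) (t r : ℕ)
    (p : (Fin k → Bool) → List Bool) : Prop :=
  (∀ x, (p x).length = r) ∧
  ∀ x y, f x ≠ f y → 2 * t < dID (List.ofFn x ++ p x) (List.ofFn y ++ p y)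

/-- The optimal redundancy `r^f_ID(k,t)`. -/
noncomputable def optRed {k : ℕ} {S : Type*} (f : (Fin k → Bool) → S) (t : ℕ) : ℕ :=
  sInf {r | ∃ p, IsFCIDC f t r p}

/-- `p` is an irregular insdel-distance code of length `r` for the matrix `I`. -/
noncomputable def IsIrregularCode {M : ℕ} (I : Fin M → Fin M → ℕ) (r : ℕ)
    (p : Fin M → List Bool) : Prop :=
  (∀ i, (p i).length = r) ∧ ∀ i j, I i j ≤ dID (p i) (p j)

/-- `N^(1)_ID(I)`: least length of an irregular insdel-distance code for `I`. -/
noncomputable def N1 {M : ℕ} (I : Fin M → Fin M → ℕ) : ℕ :=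
  sInf {r | ∃ p, IsIrregularCode I r p}

/-- `N^(2)_ID(I; K)`: least length `r ≥ K` of an irregular insdel-distance code for `I`. -/
noncomputable def N2 {M : ℕ} (I : Fin M → Fin M → ℕ) (K : ℕ) : ℕ :=
  sInf {r | K ≤ r ∧ ∃ p, IsIrregularCode I r p}

-- The insdel distance matrix `I_f^(1)(t, x₁, …, x_M)`.
open Classical in
noncomputable def Imat1 {k M : ℕ} {S : Type*} (f : (Fin k → Bool) → S) (t : ℕ)
    (x : Fin M → Fin k → Bool) : Fin M → Fin M → ℕ :=
  fun i j => if f (x i) ≠ f (x j) then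
    2 * t + 2 - dID (List.ofFn (x i)) (List.ofFn (x j)) else 0

-- The insdel distance matrix `I_f^(2)(t, x₁, …, x_M)`.
open Classical in
noncomputable def Imat2 {k M : ℕ} {S : Type*} (f : (Fin k → Bool) → S) (t : ℕ)
    (x : Fin M → Fin k → Bool) : Fin M → Fin M → ℕ :=
  fun i j => if f (x i) ≠ f (x j) then
    2 * t + 2 + 2 * k - dID (List.ofFn (x i)) (List.ofFn (x j)) else 0

/-- The function distance `d^f_ID(a,b)`. -/
noncomputable def dfID {k : ℕ} {S : Type*} (f : (Fin k → Bool) → S) (a b : S) : ℕ :=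
  sInf {d | ∃ x y : Fin k → Bool, f x = a ∧ f y = b ∧ dID (List.ofFn x) (List.ofFn y) = d}

/-- The function distance matrix `I_f^(2)(t, f₁, …, f_E)`, with entries
`max(2(t+1+k) − d^f_ID(f_i, f_j), 0)` off the diagonal and `0` on the diagonal. -/
noncomputable def funMat2 {k E : ℕ} {S : Type*} (f : (Fin k → Bool) → S) (t : ℕ)
    (fs : Fin E → S) : Fin E → Fin E → ℕ :=
  fun i j => if i = j then 0 else 2 * (t + 1 + k) - dfID f (fs i) (fs j)

/-- The uniform `M × M` matrix with off-diagonal entries `d` and zero diagonal. -/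
def uniMat (M d : ℕ) : Fin M → Fin M → ℕ := fun i j => if i = j then 0 else d

/-- The number-of-runs function on `F_2^k`. -/
def runsFn (k : ℕ) (x : Fin k → Bool) : ℕ := runs (List.ofFn x)

/-- The VT-syndrome function `f(x) = Σ_{j=1}^k j·x_j mod (k+1)`. -/
def vtFn (k : ℕ) (x : Fin k → Bool) : ℕ :=
  (∑ j : Fin k, ((j : ℕ) + 1) * (if x j then 1 else 0)) % (k + 1)

/-- The function ball `B^f_ID(u, ρ) = f(B_ID(u, ρ))`. -/
def fball {k : ℕ} {S : Type*} (f : (Fin k → Bool) → S) (u : Fin k → Bool) (ρ : ℕ) : Set S :=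
  f '' {v : Fin k → Bool | dID (List.ofFn u) (List.ofFn v) ≤ ρ}

/-- `V_ID(r, d)`: the maximum size of an insdel ball of (integer) radius `d`
among centers in `F_2^r`. -/
noncomputable def Vid (r : ℕ) (d : ℤ) : ℕ :=
  sSup (Set.range fun x : Fin r → Bool =>
    Nat.card {y : Fin r → Bool | (dID (List.ofFn x) (List.ofFn y) : ℤ) ≤ d})

lemma runs_cons_cons (a b : Bool) (l : List Bool) :
    runs (a :: b :: l) = runs (b :: l) + (if a ≠ b then 1 else 0) := by
  unfold runs
  rw [List.destutter_cons_cons]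
  by_cases h : a ≠ b
  · simp [h, List.destutter_cons']
  · push_neg at h
    subst h
    simp [List.destutter_cons']

lemma runs_le_runs_cons (a : Bool) (l : List Bool) : runs l ≤ runs (a :: l) := by
  cases l with
  | nil => simp [runs]
  | cons b t => rw [runs_cons_cons]; omega

lemma runs_cons_le (a : Bool) (l : List Bool) : runs (a :: l) ≤ runs l + 1 := by
  cases l with
  | nil => simp [runs]
  | cons b t => rw [runs_cons_cons]; split <;> omega

lemma runs_cons_le_cons_cons (a b : Bool) (l : List Bool) :
    runs (a :: l) ≤ runs (a :: b :: l) := by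
  rw [runs_cons_cons]
  by_cases h : a = b
  · subst h; simp [runs_cons_cons]
  · have h1 := runs_cons_le a l
    have h2 := runs_le_runs_cons b l
    simp [h]; omega

lemma runs_mono_of_sublist {z x : List Bool} (h : z.Sublist x) :
    runs z ≤ runs x ∧ ∀ a, runs (a :: z) ≤ runs (a :: x) := by
  induction h with
  | slnil => exact ⟨le_refl _, fun a => le_refl _⟩
  | cons b h ih =>
    refine ⟨ih.1.trans (runs_le_runs_cons b _), fun a => (ih.2 a).trans ?_⟩
    exact runs_cons_le_cons_cons a b _
  | cons_cons b h ih =>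
    refine ⟨ih.2 b, fun a => ?_⟩
    rw [runs_cons_cons, runs_cons_cons]
    have := ih.2 b
    omega

lemma runs_le_of_sublist {z x : List Bool} (h : z.Sublist x) :
    runs x + 2 * z.length ≤ runs z + 2 * x.length ∧
    ∀ a, runs (a :: x) + 2 * z.length ≤ runs (a :: z) + 2 * x.length := by
  induction h with
  | slnil => exact ⟨le_refl _, fun a => le_refl _⟩
  | @cons z' x' b h ih =>
    constructor
    · have h1 := runs_cons_le b x'
      have := ih.1; simp only [List.length_cons]; omega
    · intro a
      have h2 := runs_cons_le a x'
      have h3 := runs_le_runs_cons a z'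
      have h4 := ih.1
      simp only [List.length_cons]
      calc runs (a :: b :: x') + 2 * z'.length
          ≤ runs (b :: x') + 1 + 2 * z'.length := by
            have := runs_cons_cons a b x'; split at this <;> omega
        _ ≤ runs x' + 2 + 2 * z'.length := by have := runs_cons_le b x'; omega
        _ ≤ runs z' + 2 * x'.length + 2 := by omega
        _ ≤ runs (a :: z') + 2 * (x'.length + 1) := by omega
  | cons_cons b h ih =>
    constructor
    · have := ih.2 b; simp only [List.length_cons]; omega
    · intro a
      rw [runs_cons_cons, runs_cons_cons]
      have := ih.2 b
      simp only [List.length_cons]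
      omega

lemma lcsLen_spec (x y : List Bool) :
    ∃ z : List Bool, z.length = lcsLen x y ∧ z.Sublist x ∧ z.Sublist y := by
  have hne : {n | ∃ z : List Bool, z.length = n ∧ z.Sublist x ∧ z.Sublist y}.Nonempty :=
    ⟨0, [], rfl, List.nil_sublist _, List.nil_sublist _⟩
  have hbdd : BddAbove {n | ∃ z : List Bool, z.length = n ∧ z.Sublist x ∧ z.Sublist y} := by
    refine ⟨x.length, fun n hn => ?_⟩
    obtain ⟨z, hz, hzx, _⟩ := hn
    exact hz ▸ hzx.length_le
  have := Nat.sSup_mem hne hbdd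
  obtain ⟨z, hz, hzx, hzy⟩ := this
  exact ⟨z, hz, hzx, hzy⟩

theorem stmt1 (n : ℕ) (x y : List Bool) (hx : x.length = n) (hy : y.length = n) :
    Nat.dist (runs x) (runs y) ≤ dID x y ∧
    (Odd (Nat.dist (runs x) (runs y)) → Nat.dist (runs x) (runs y) + 1 ≤ dID x y) := by
  obtain ⟨z, hz, hzx, hzy⟩ := lcsLen_spec x y
  have hzlen : z.length ≤ n := hx ▸ hzx.length_le
  have hdid : dID x y = 2 * (n - z.length) := by
    unfold dID
    rw [hx, hy, ← hz]
    omega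
  have h1 : runs x + 2 * z.length ≤ runs z + 2 * x.length := (runs_le_of_sublist hzx).1
  have h2 : runs y + 2 * z.length ≤ runs z + 2 * y.length := (runs_le_of_sublist hzy).1
  have h3 : runs z ≤ runs x := (runs_mono_of_sublist hzx).1
  have h4 : runs z ≤ runs y := (runs_mono_of_sublist hzy).1
  have hdist : Nat.dist (runs x) (runs y) ≤ dID x y := by
    rw [Nat.dist]
    rw [hdid]
    rw [hx] at h1; rw [hy] at h2
    omega
  refine ⟨hdist, fun hodd => ?_⟩
  have heven : Even (dID x y) := by rw [hdid]; exact even_two_mul _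
  rcases Nat.lt_or_ge (Nat.dist (runs x) (runs y)) (dID x y) with h | h
  · omega
  · exfalso
    have : Nat.dist (runs x) (runs y) = dID x y := le_antisymm hdist h
    rw [this] at hodd
    exact (Nat.not_odd_iff_even.mpr heven) hodd
end

section
/- For any function f : F_2^k → S and any t ≥ 1, if x₁, …, x_{2^k} is an enumeration of all vectors of F_2^k, then N^(1)_ID(I_f^(1)(t, x₁, …, x_{2^k})) ≤ r^f_ID(k, t) ≤ N^(2)_ID(I_f^(2)(t, x₁, …, x_{2^k}); k). -/
section AuxLemmas

lemma lcs_bdd (x y : List Bool) :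
    BddAbove {n | ∃ z : List Bool, z.length = n ∧ z.Sublist x ∧ z.Sublist y} :=
  ⟨x.length, fun n ⟨z, hz, hzx, _⟩ => hz ▸ hzx.length_le⟩

lemma lcs_nonempty (x y : List Bool) :
    {n | ∃ z : List Bool, z.length = n ∧ z.Sublist x ∧ z.Sublist y}.Nonempty :=
  ⟨0, [], rfl, List.nil_sublist _, List.nil_sublist _⟩

lemma le_lcsLen {x y z : List Bool} (hzx : z.Sublist x) (hzy : z.Sublist y) :
    z.length ≤ lcsLen x y :=
  le_csSup (lcs_bdd x y) ⟨z, rfl, hzx, hzy⟩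

lemma lcsLen_le_left (x y : List Bool) : lcsLen x y ≤ x.length := by
  obtain ⟨z, h1, h2, _⟩ := lcsLen_spec x y
  exact h1 ▸ h2.length_le

lemma lcsLen_le_right (x y : List Bool) : lcsLen x y ≤ y.length := by
  obtain ⟨z, h1, _, h3⟩ := lcsLen_spec x y
  exact h1 ▸ h3.length_le

lemma dID_def (x y : List Bool) : dID x y = x.length + y.length - 2 * lcsLen x y := rfl

lemma lcs_superadd (a b c d : List Bool) :
    lcsLen a c + lcsLen b d ≤ lcsLen (a ++ b) (c ++ d) := by
  obtain ⟨z1, h1, h1a, h1c⟩ := lcsLen_spec a c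
  obtain ⟨z2, h2, h2b, h2d⟩ := lcsLen_spec b d
  have := le_lcsLen (h1a.append h2b) (h1c.append h2d)
  simpa [h1, h2] using this

lemma lcs_split (a b c d : List Bool) :
    lcsLen (a ++ b) (c ++ d) ≤
      lcsLen a c + lcsLen b d + max (min b.length c.length) (min a.length d.length) := by
  obtain ⟨z, hzl, hz1, hz2⟩ := lcsLen_spec (a ++ b) (c ++ d)
  rw [List.sublist_append_iff] at hz1 hz2
  obtain ⟨z1, z2, rfl, h1a, h2b⟩ := hz1
  obtain ⟨w1, w2, heq, h1c, h2d⟩ := hz2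
  rw [List.append_eq_append_iff] at heq
  rcases heq with ⟨m, hw1, hz2⟩ | ⟨m, hz1, hw2⟩
  · subst hw1; subst hz2
    have hz1c : z1.Sublist c := (List.sublist_append_left z1 m).trans h1c
    have hmc : m.Sublist c := (List.sublist_append_right z1 m).trans h1c
    have hmb : m.Sublist b := (List.sublist_append_left m w2).trans h2b
    have hw2b : w2.Sublist b := (List.sublist_append_right m w2).trans h2b
    have e1 : z1.length ≤ lcsLen a c := le_lcsLen h1a hz1c
    have e2 : w2.length ≤ lcsLen b d := le_lcsLen hw2b h2d
    have e3 : m.length ≤ b.length := hmb.length_le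
    have e4 : m.length ≤ c.length := hmc.length_le
    rw [← hzl]
    simp only [List.length_append]
    omega
  · subst hz1; subst hw2
    have hw1a : w1.Sublist a := (List.sublist_append_left w1 m).trans h1a
    have hma : m.Sublist a := (List.sublist_append_right w1 m).trans h1a
    have hmd : m.Sublist d := (List.sublist_append_left m z2).trans h2d
    have hz2d : z2.Sublist d := (List.sublist_append_right m z2).trans h2d
    have e1 : w1.length ≤ lcsLen a c := le_lcsLen hw1a h1c
    have e2 : z2.length ≤ lcsLen b d := le_lcsLen h2b hz2d
    have e3 : m.length ≤ a.length := hma.length_le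
    have e4 : m.length ≤ d.length := hmd.length_le
    rw [← hzl]
    simp only [List.length_append]
    omega

lemma dID_concat_le (a b c d : List Bool) :
    dID (a ++ b) (c ++ d) ≤ dID a c + dID b d := by
  have h := lcs_superadd a b c d
  have l1 := lcsLen_le_left a c
  have l2 := lcsLen_le_right a c
  have l3 := lcsLen_le_left b d
  have l4 := lcsLen_le_right b d
  simp only [dID_def, List.length_append]
  omega

lemma dID_split_ge {k : ℕ} (a b c d : List Bool) (ha : a.length = k) (hc : c.length = k)
    (hb : k ≤ b.length) (hd : k ≤ d.length) :
    dID a c + dID b d ≤ dID (a ++ b) (c ++ d) + 2 * k := by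
  have h := lcs_split a b c d
  have l1 := lcsLen_le_left a c
  have l3 := lcsLen_le_left b d
  have l4 := lcsLen_le_right b d
  have l5 := lcsLen_le_left (a ++ b) (c ++ d)
  simp only [List.length_append] at l5
  simp only [dID_def, List.length_append]
  rw [ha] at *
  rw [hc] at *
  omega

/-- Unary codeword `1^a 0^(R-a)`. -/
def unaryWord (R a : ℕ) : List Bool :=
  List.replicate a true ++ List.replicate (R - a) false

lemma unaryWord_length {R a : ℕ} (h : a ≤ R) : (unaryWord R a).length = R := by
  simp [unaryWord]; omega

lemma count_true_add_count_false (z : List Bool) : z.count true + z.count false = z.length := by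
  induction z with
  | nil => rfl
  | cons h t ih => cases h <;> simp [List.count_cons] <;> omega

lemma lcs_unaryWord_le {R a b : ℕ} :
    lcsLen (unaryWord R a) (unaryWord R b) ≤ min a b + min (R - a) (R - b) := by
  obtain ⟨z, hzl, hz1, hz2⟩ := lcsLen_spec (unaryWord R a) (unaryWord R b)
  have c1 : z.count true ≤ a := by
    have := hz1.count_le true
    simpa [unaryWord, List.count_append, List.count_replicate] using this
  have c2 : z.count true ≤ b := by
    have := hz2.count_le true
    simpa [unaryWord, List.count_append, List.count_replicate] using this
  have c3 : z.count false ≤ R - a := by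
    have := hz1.count_le false
    simpa [unaryWord, List.count_append, List.count_replicate] using this
  have c4 : z.count false ≤ R - b := by
    have := hz2.count_le false
    simpa [unaryWord, List.count_append, List.count_replicate] using this
  have := count_true_add_count_false z
  omega

lemma dID_unaryWord_ge {R a b c : ℕ} (ha : a ≤ R) (hb : b ≤ R)
    (h : a + c ≤ b ∨ b + c ≤ a) :
    2 * c ≤ dID (unaryWord R a) (unaryWord R b) := by
  have h1 := lcs_unaryWord_le (R := R) (a := a) (b := b)
  rw [dID_def, unaryWord_length ha, unaryWord_length hb]
  omega

lemma dID_le_two_k {k : ℕ} (u v : Fin k → Bool) :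
    dID (List.ofFn u) (List.ofFn v) ≤ 2 * k := by
  rw [dID_def]
  simp
  omega

end AuxLemmas

section Existence

lemma two_pow_pos' (k : ℕ) : 0 < 2 ^ k := Nat.pow_pos (by norm_num)

lemma exists_FCIDC {S : Type*} (k t : ℕ) (f : (Fin k → Bool) → S) :
    ∃ r p, IsFCIDC f t r p := by
  classical
  obtain ⟨e⟩ : Nonempty ((Fin k → Bool) ≃ Fin (2 ^ k)) :=
    ⟨Fintype.equivFinOfCardEq (by simp)⟩
  set c := t + 1 + k with hc
  set R := c * 2 ^ k with hR
  have hle : ∀ u : Fin k → Bool, c * (e u : ℕ) ≤ R := fun u =>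
    Nat.mul_le_mul_left c (e u).isLt.le
  have hkR : k ≤ R := le_trans (by omega) (Nat.le_mul_of_pos_right c (two_pow_pos' k))
  refine ⟨R, fun u => unaryWord R (c * (e u : ℕ)), fun u => unaryWord_length (hle u), ?_⟩
  intro u v hf
  have hune : u ≠ v := fun h => hf (by rw [h])
  have huv : (e u : ℕ) ≠ (e v : ℕ) := fun h => hune (e.injective (Fin.val_injective h))
  have hun : 2 * c ≤ dID (unaryWord R (c * (e u : ℕ))) (unaryWord R (c * (e v : ℕ))) := by
    apply dID_unaryWord_ge (hle u) (hle v)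
    rcases Nat.lt_or_ge (e u : ℕ) (e v : ℕ) with h | h
    · left
      have := Nat.mul_le_mul_left c (Nat.succ_le_of_lt h)
      rw [Nat.mul_succ] at this
      omega
    · right
      have hlt : (e v : ℕ) < (e u : ℕ) := lt_of_le_of_ne h (Ne.symm huv)
      have := Nat.mul_le_mul_left c (Nat.succ_le_of_lt hlt)
      rw [Nat.mul_succ] at this
      omega
  have hsplit := dID_split_ge (k := k) (List.ofFn u) (unaryWord R (c * (e u : ℕ)))
    (List.ofFn v) (unaryWord R (c * (e v : ℕ))) (by simp) (by simp)
    (by rw [unaryWord_length (hle u)]; exact hkR)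
    (by rw [unaryWord_length (hle v)]; exact hkR)
  show 2 * t < dID (List.ofFn u ++ unaryWord R (c * (e u : ℕ)))
    (List.ofFn v ++ unaryWord R (c * (e v : ℕ)))
  omega

lemma exists_irr {S : Type*} (k t : ℕ) (f : (Fin k → Bool) → S)
    (x : Fin (2 ^ k) → Fin k → Bool) :
    ∃ r, k ≤ r ∧ ∃ q, IsIrregularCode (Imat2 f t x) r q := by
  classical
  set c := t + 1 + k with hc
  set R := c * 2 ^ k with hR
  have hle : ∀ i : Fin (2 ^ k), c * (i : ℕ) ≤ R := fun i => Nat.mul_le_mul_left c i.isLt.le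
  have hkR : k ≤ R := le_trans (by omega) (Nat.le_mul_of_pos_right c (two_pow_pos' k))
  refine ⟨R, hkR, fun i => unaryWord R (c * (i : ℕ)),
    fun i => unaryWord_length (hle i), ?_⟩
  intro i j
  by_cases hf : f (x i) ≠ f (x j)
  · have hij : (i : ℕ) ≠ (j : ℕ) := by
      intro h
      exact hf (by rw [Fin.val_injective h])
    have hun : 2 * c ≤ dID (unaryWord R (c * (i : ℕ))) (unaryWord R (c * (j : ℕ))) := by
      apply dID_unaryWord_ge (hle i) (hle j)
      rcases Nat.lt_or_ge (i : ℕ) (j : ℕ) with h | h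
      · left
        have := Nat.mul_le_mul_left c (Nat.succ_le_of_lt h)
        rw [Nat.mul_succ] at this
        omega
      · right
        have hlt : (j : ℕ) < (i : ℕ) := lt_of_le_of_ne h (Ne.symm hij)
        have := Nat.mul_le_mul_left c (Nat.succ_le_of_lt hlt)
        rw [Nat.mul_succ] at this
        omega
    simp only [Imat2, if_pos hf]
    have hs := Nat.sub_le (2 * t + 2 + 2 * k) (dID (List.ofFn (x i)) (List.ofFn (x j)))
    omega
  · simp only [Imat2, if_neg hf]
    exact Nat.zero_le _

end Existence

theorem stmt4 {S : Type*} (k t : ℕ) (ht : 1 ≤ t) (f : (Fin k → Bool) → S)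
    (x : Fin (2 ^ k) → Fin k → Bool) (hx : Function.Bijective x) :
    N1 (Imat1 f t x) ≤ optRed f t ∧ optRed f t ≤ N2 (Imat2 f t x) k := by
  classical
  constructor
  · -- N1 ≤ optRed
    have hne : {r | ∃ p, IsFCIDC f t r p}.Nonempty := by
      obtain ⟨r, p, h⟩ := exists_FCIDC k t f
      exact ⟨r, p, h⟩
    obtain ⟨p, hp⟩ : ∃ p, IsFCIDC f t (optRed f t) p := Nat.sInf_mem hne
    apply Nat.sInf_le
    refine ⟨fun i => p (x i), fun i => hp.1 _, ?_⟩
    intro i j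
    by_cases hf : f (x i) ≠ f (x j)
    · simp only [Imat1, if_pos hf]
      have hd := hp.2 (x i) (x j) hf
      have h1 := dID_concat_le (List.ofFn (x i)) (p (x i)) (List.ofFn (x j)) (p (x j))
      have e1 : dID (List.ofFn (x i)) (List.ofFn (x j)) =
          k + k - 2 * lcsLen (List.ofFn (x i)) (List.ofFn (x j)) := by
        rw [dID_def]; simp
      have e2 : dID (p (x i)) (p (x j)) =
          optRed f t + optRed f t - 2 * lcsLen (p (x i)) (p (x j)) := by
        rw [dID_def, hp.1, hp.1]
      have l1 : lcsLen (List.ofFn (x i)) (List.ofFn (x j)) ≤ k := by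
        have := lcsLen_le_left (List.ofFn (x i)) (List.ofFn (x j))
        simpa using this
      have l2 : lcsLen (p (x i)) (p (x j)) ≤ optRed f t := by
        have := lcsLen_le_left (p (x i)) (p (x j))
        rwa [hp.1] at this
      omega
    · simp only [Imat1, if_neg hf]
      exact Nat.zero_le _
  · -- optRed ≤ N2
    have hne : {r | k ≤ r ∧ ∃ q, IsIrregularCode (Imat2 f t x) r q}.Nonempty := by
      obtain ⟨r, hr, q, hq⟩ := exists_irr k t f x
      exact ⟨r, hr, q, hq⟩
    obtain ⟨hkr, q, hq⟩ : k ≤ N2 (Imat2 f t x) k ∧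
        ∃ q, IsIrregularCode (Imat2 f t x) (N2 (Imat2 f t x) k) q := Nat.sInf_mem hne
    apply Nat.sInf_le
    set e := Equiv.ofBijective x hx with he
    refine ⟨fun u => q (e.symm u), fun u => hq.1 _, ?_⟩
    intro u v hf
    have him := hq.2 (e.symm u) (e.symm v)
    have hu : x (e.symm u) = u := e.apply_symm_apply u
    have hv : x (e.symm v) = v := e.apply_symm_apply v
    simp only [Imat2] at him
    rw [hu, hv, if_pos hf] at him
    have hsplit := dID_split_ge (k := k) (List.ofFn u) (q (e.symm u))
      (List.ofFn v) (q (e.symm v)) (by simp) (by simp)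
      (by rw [hq.1]; exact hkr) (by rw [hq.1]; exact hkr)
    have e1 : dID (List.ofFn u) (List.ofFn v) =
        k + k - 2 * lcsLen (List.ofFn u) (List.ofFn v) := by
      rw [dID_def]; simp
    have l1 : lcsLen (List.ofFn u) (List.ofFn v) ≤ k := by
      have := lcsLen_le_left (List.ofFn u) (List.ofFn v)
      simpa using this
    show 2 * t < dID (List.ofFn u ++ q (e.symm u)) (List.ofFn v ++ q (e.symm v))
    omega
end
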